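/- Let n ≥ 2. In ℝ^{n} with standard basis e_1, …, e_{n}, set α_i = e_i − e_{i+1} for 1 ≤ i ≤ n−1 and α_n = e_n, and let τ : ℝ^n → ℝ^n be the linear map with τ(e_1) = −e_1 and τ(e_j) = e_j for j ≥ 2. Define c = r_{α_n} ∘ r_{α_{n−1}} ∘ ⋯ ∘ r_{α_1} ∘ τ (with τ applied first, then r_{α_1}, …, and r_{α_n} last). Then c(e_1) = e_n and c(e_i) = e_{i−1} for 2 ≤ i ≤ n, i.e. c is a cyclic permutation of the basis vectors; and the fixed-point space {v ∈ ℝ^n : c(v) = v} is spanned by e_1 + ⋯ + e_n. -/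

import Mathlib

open Finset

/-- The orthogonal reflection `r_a(x) = x - (2⟨x,a⟩/⟨a,a⟩)·a` in a nonzero
vector `a` of Euclidean space. -/
noncomputable def reflect {m : ℕ} (a : EuclideanSpace ℝ (Fin m))
    (x : EuclideanSpace ℝ (Fin m)) : EuclideanSpace ℝ (Fin m) :=
  x - ((2 * (inner ℝ x a : ℝ) / (inner ℝ a a : ℝ)) • a)

/-- The standard basis vector `e i` of Euclidean space `ℝ^m`. -/
noncomputable def stdVec (m : ℕ) (i : Fin m) : EuclideanSpace ℝ (Fin m) :=
  EuclideanSpace.single i 1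

/-!
In coordinates, the reflection in `e_i - e_{i+1}` swaps two adjacent coordinates, while the
reflection in `e_n` and `τ` each negate a single coordinate. The adjacent swaps compose to the
cycle `Fin.cycleRange`, which over the full range is `finRotate`; the rotation carries the
coordinate negated by `τ` onto the one negated by the last reflection, so the signs cancel and
`(c x)_k = x_{k+1 mod n}`. Hence `c` permutes the basis cyclically, and a vector fixed by `c` has
all coordinates equal.
-/

open Equiv

section Coordinates

variable {n : ℕ}

lemma stdVec_apply (i k : Fin n) : stdVec n i k = if k = i then 1 else 0 := by
  simp [stdVec, PiLp.single_apply]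

lemma inner_stdVec_right (x : EuclideanSpace ℝ (Fin n)) (i : Fin n) :
    inner ℝ x (stdVec n i) = x i := by
  simp [stdVec, EuclideanSpace.inner_single_right]

lemma reflect_apply (a x : EuclideanSpace ℝ (Fin n)) (k : Fin n) :
    reflect a x k = x k - 2 * inner ℝ x a / inner ℝ a a * a k := by
  simp [reflect]

lemma reflect_stdVec_sub_stdVec_apply {i j : Fin n} (hij : i ≠ j)
    (x : EuclideanSpace ℝ (Fin n)) (k : Fin n) :
    reflect (stdVec n i - stdVec n j) x k = x (swap i j k) := by
  have hnorm : inner ℝ (stdVec n i - stdVec n j) (stdVec n i - stdVec n j) = (2 : ℝ) := by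
    simp only [inner_sub_left, inner_sub_right, inner_stdVec_right, stdVec_apply, hij, hij.symm]
    norm_num
  rw [reflect_apply, hnorm, inner_sub_right, inner_stdVec_right, inner_stdVec_right]
  simp only [PiLp.sub_apply, stdVec_apply]
  rcases eq_or_ne k i with rfl | hki
  · simp [hij]
  rcases eq_or_ne k j with rfl | hkj
  · simp [hki]
  · simp [hki, hkj, swap_apply_of_ne_of_ne]

lemma reflect_stdVec_apply (i : Fin n) (x : EuclideanSpace ℝ (Fin n)) (k : Fin n) :
    reflect (stdVec n i) x k = if k = i then -x k else x k := by
  rw [reflect_apply, inner_stdVec_right, inner_stdVec_right, stdVec_apply, stdVec_apply,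
    if_pos rfl]
  split_ifs with h
  · rw [h]; ring
  · ring

lemma sum_smul_stdVec (x : EuclideanSpace ℝ (Fin n)) : ∑ i, x i • stdVec n i = x := by
  ext k
  simp [stdVec_apply]

lemma LinearMap.apply_eq_mul_of_apply_stdVec
    (f : EuclideanSpace ℝ (Fin n) →ₗ[ℝ] EuclideanSpace ℝ (Fin n)) (d : Fin n → ℝ)
    (hf : ∀ i, f (stdVec n i) = d i • stdVec n i) (x : EuclideanSpace ℝ (Fin n)) (k : Fin n) :
    f x k = d k * x k := by
  conv_lhs => rw [← sum_smul_stdVec x]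
  simp [hf, stdVec_apply, mul_comm]

lemma smul_sum_stdVec_apply (t : ℝ) (k : Fin n) : (t • ∑ i, stdVec n i) k = t := by
  simp [stdVec_apply]

end Coordinates

lemma Fin.cycleRange_swap_succ {m k : ℕ} (hk : k < m) (j : Fin (m + 1)) :
    Fin.cycleRange ⟨k, by omega⟩ (swap ⟨k, by omega⟩ ⟨k + 1, by omega⟩ j) =
      Fin.cycleRange ⟨k + 1, by omega⟩ j := by
  rw [Fin.cycleRange_apply, Fin.cycleRange_apply, swap_apply_def]
  simp only [Fin.ext_iff, Fin.lt_def]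
  split_ifs <;> simp_all [Fin.val_add_one_of_lt'] <;> omega

lemma foldl_reflect_adjacent_apply {m k : ℕ} (hk : k ≤ m) (y : EuclideanSpace ℝ (Fin (m + 1)))
    (j : Fin (m + 1)) :
    (List.ofFn fun i : Fin k =>
        reflect (stdVec (m + 1) ⟨i, by omega⟩ - stdVec (m + 1) ⟨i + 1, by omega⟩)).foldl
      (fun v f => f v) y j = y (Fin.cycleRange ⟨k, by omega⟩ j) := by
  induction k generalizing j with
  | zero => simp
  | succ k ih =>
    rw [List.ofFn_succ', List.concat_eq_append, List.foldl_append, List.foldl_cons,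
      List.foldl_nil, reflect_stdVec_sub_stdVec_apply (by simp)]
    simp only [Fin.val_castSucc, Fin.val_last]
    rw [ih (by omega), Fin.cycleRange_swap_succ (by omega)]

lemma List.foldl_comp_apply {α : Type*} (l : List (α → α)) (g : α → α) (x : α) :
    l.foldl (fun g f => f ∘ g) g x = l.foldl (fun v f => f v) (g x) := by
  induction l generalizing g with
  | nil => rfl
  | cons f l ih => exact ih (f ∘ g)

lemma twistedCoxeterB_apply {m : ℕ}
    (τ : EuclideanSpace ℝ (Fin (m + 1)) →ₗ[ℝ] EuclideanSpace ℝ (Fin (m + 1)))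
    (hτ : ∀ x k, τ x k = if k = 0 then -x k else x k)
    (x : EuclideanSpace ℝ (Fin (m + 1))) (k : Fin (m + 1)) :
    (List.ofFn fun i : Fin (m + 1) =>
        reflect (if h : (i : ℕ) + 1 < m + 1 then stdVec _ i - stdVec _ ⟨(i : ℕ) + 1, h⟩
          else stdVec _ i)).foldl (fun g f => f ∘ g) ⇑τ x k = x (finRotate (m + 1) k) := by
  rw [List.foldl_comp_apply, List.ofFn_succ', List.concat_eq_append, List.foldl_append,
    List.foldl_cons, List.foldl_nil, dif_neg (by simp), reflect_stdVec_apply]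
  simp only [Fin.val_castSucc, add_lt_add_iff_right, Fin.is_lt, dif_pos]
  erw [foldl_reflect_adjacent_apply le_rfl]
  rw [show (⟨m, by omega⟩ : Fin (m + 1)) = Fin.last m from rfl, Fin.cycleRange_last, hτ]
  rcases eq_or_ne k (Fin.last m) with rfl | hk
  · simp
  · have hk0 : finRotate (m + 1) k ≠ 0 := by
      rwa [← finRotate_last, Ne, (finRotate _).injective.eq_iff]
    rw [if_neg hk, if_neg hk0]

lemma apply_stdVec_of_apply_eq_comp {n : ℕ} (σ : Perm (Fin n))
    (f : EuclideanSpace ℝ (Fin n) → EuclideanSpace ℝ (Fin n)) (hf : ∀ x k, f x k = x (σ k))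
    (i : Fin n) : f (stdVec n i) = stdVec n (σ.symm i) := by
  ext k
  simp only [hf, stdVec_apply, σ.eq_symm_apply]

lemma Fin.apply_eq_apply_zero_of_apply_finRotate {α : Type*} {m : ℕ} (f : Fin (m + 1) → α)
    (hf : ∀ k, f (finRotate (m + 1) k) = f k) (k : Fin (m + 1)) : f k = f 0 := by
  induction k using Fin.induction with
  | zero => rfl
  | succ i ih => rw [← Fin.coeSucc_eq_succ, ← finRotate_apply, hf, ih]

/-- Type `B_n`, `n ≥ 2`, twisted case: with simple roots
`α_i = e_i - e_{i+1}` (`i < n-1`, 0-based), `α_n = e_{n-1}`, and `τ` the linear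
map with `τ e_0 = -e_0` and `τ e_j = e_j` for `j ≠ 0`, the linear part
`c = r_{α_n} ∘ ⋯ ∘ r_{α_1} ∘ τ` of the twisted Coxeter element (τ applied first)
satisfies `c e_0 = e_{n-1}` and `c e_j = e_{j-1}` for `1 ≤ j ≤ n-1`, i.e. it is a
cyclic permutation of the basis, and its fixed-point space is the line spanned
by `e_0 + ⋯ + e_{n-1}`. -/
theorem twistedCoxeterB_action_and_fixed_space (n : ℕ) (hn : 2 ≤ n)
    (τ : EuclideanSpace ℝ (Fin n) →ₗ[ℝ] EuclideanSpace ℝ (Fin n))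
    (hτ0 : τ (stdVec n ⟨0, by omega⟩) = -stdVec n ⟨0, by omega⟩)
    (hτ : ∀ i : Fin n, (i : ℕ) ≠ 0 → τ (stdVec n i) = stdVec n i)
    (c : EuclideanSpace ℝ (Fin n) → EuclideanSpace ℝ (Fin n))
    (hc : c = (List.ofFn fun i : Fin n =>
        reflect (if h : (i : ℕ) + 1 < n then stdVec n i - stdVec n ⟨(i : ℕ) + 1, h⟩
          else stdVec n i)).foldl (fun g f => f ∘ g) ⇑τ) :
    c (stdVec n ⟨0, by omega⟩) = stdVec n ⟨n - 1, by omega⟩ ∧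
    (∀ j : ℕ, ∀ _ : 1 ≤ j, ∀ _ : j < n,
        c (stdVec n ⟨j, by omega⟩) = stdVec n ⟨j - 1, by omega⟩) ∧
    (∀ x : EuclideanSpace ℝ (Fin n), c x = x ↔
      ∃ t : ℝ, x = t • ∑ i : Fin n, stdVec n i) := by
  obtain ⟨m, rfl⟩ : ∃ m, n = m + 1 := ⟨n - 1, by omega⟩
  have hτx : ∀ x k, τ x k = if k = 0 then -x k else x k := by
    intro x k
    rw [τ.apply_eq_mul_of_apply_stdVec (fun i => if i = 0 then -1 else 1)]
    · split_ifs <;> ring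
    · intro i
      rcases eq_or_ne i 0 with rfl | hi
      · simpa using hτ0
      · simpa [hi] using hτ i (Fin.val_ne_zero_iff.mpr hi)
  have hcx : ∀ x k, c x k = x (finRotate (m + 1) k) := hc ▸ twistedCoxeterB_apply τ hτx
  have hce := apply_stdVec_of_apply_eq_comp _ c hcx
  refine ⟨?_, fun j hj1 hjn => ?_, fun x => ?_⟩
  · rw [hce, (Equiv.symm_apply_eq _).mpr finRotate_last'.symm]
    rfl
  · have hj : (⟨j, hjn⟩ : Fin (m + 1)) = finRotate (m + 1) ⟨j - 1, by omega⟩ := by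
      rw [finRotate_of_lt (by omega)]
      simp only [Nat.sub_add_cancel hj1]
    rw [hce, hj, Equiv.symm_apply_apply]
  · constructor
    · intro hfix
      refine ⟨x 0, ?_⟩
      ext k
      rw [smul_sum_stdVec_apply]
      exact Fin.apply_eq_apply_zero_of_apply_finRotate x (fun k => by rw [← hcx, hfix]) k
    · rintro ⟨t, rfl⟩
      ext k
      rw [hcx, smul_sum_stdVec_apply, smul_sum_stdVec_apply]
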